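/- arXiv:1011.3601 — 3 statements merged into one kernel-verified Lean document; each statement's English description precedes it below -/
import Mathlib

section
/- There exist constants κ > 0 and c > 0 such that for every p ∈ [1-q, 1) (where q ∈ (0,1) is fixed) and every Δ ∈ [0,c], a geometric random variable X with parameter p satisfies E[exp((X - 1/p - Δ)·κΔ)] ≤ exp(-0.5·Δ²·κ). -/
open MeasureTheory Real
open scoped ENNReal

/-!
Write `Y = X - 1` and `a = (1 - p) / p = 𝔼 Y`. The centred moment generating function of `Y` is
explicit, `𝔼 exp (t (Y - a)) = exp (-a t) / (1 - a (exp t - 1))`, and the second-order bounds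
`exp (-x) ≤ 1 - x + x²`, `exp t - 1 ≤ t + t²` show that it is at most `exp (2 a (1 + a) t²)`
for small `t`. Since `a (1 + a) = Var Y` is bounded uniformly for `p ≥ 1 - q`, taking `t = κ Δ`
with `κ` small enough lets the shift `-Δ t` absorb the quadratic term.
-/

lemma exp_neg_le_one_sub_add_sq {x : ℝ} (hx : 0 ≤ x) : exp (-x) ≤ 1 - x + x ^ 2 := by
  have h : 1 ≤ (1 - x + x ^ 2) * exp x := by
    nlinarith [add_one_le_exp x, sq_nonneg x, mul_nonneg (sq_nonneg x) hx]
  rw [exp_neg, inv_le_iff_one_le_mul₀ (exp_pos x)]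
  linarith

lemma exp_sub_one_le_add_sq {t : ℝ} (ht : |t| ≤ 1) : exp t - 1 ≤ t + t ^ 2 := by
  linarith [(abs_le.mp (abs_exp_sub_one_sub_id_le ht)).2]

lemma exp_neg_mul_le_exp_mul_one_sub {a t : ℝ} (ha : 0 ≤ a) (ht0 : 0 ≤ t) (ht1 : t ≤ 1)
    (hat : 4 * a * t ≤ 1) :
    exp (-(a * t)) ≤ exp (2 * a * (1 + a) * t ^ 2) * (1 - a * (exp t - 1)) := by
  set s := 2 * a * (1 + a) * t ^ 2
  have hs : 0 ≤ s := by positivity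
  have hexp : a * (exp t - 1) ≤ a * t + a * t ^ 2 := by
    nlinarith [exp_sub_one_le_add_sq (abs_le.mpr ⟨by linarith, ht1⟩)]
  have hsmall : a * t + a * t ^ 2 ≤ 1 / 2 := by nlinarith
  calc exp (-(a * t)) ≤ 1 - a * t + (a * t) ^ 2 := exp_neg_le_one_sub_add_sq (by positivity)
    _ ≤ (1 + s) * (1 - (a * t + a * t ^ 2)) := by nlinarith
    _ ≤ exp s * (1 - a * (exp t - 1)) := by
      gcongr
      · linarith
      · linarith [add_one_le_exp s]

lemma hasSum_exp_mul_geometric {p t : ℝ} (hp : p ≤ 1) (h : (1 - p) * exp t < 1) :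
    HasSum (fun n : ℕ => exp (t * n) * ((1 - p) ^ n * p)) (p / (1 - (1 - p) * exp t)) := by
  have hr : 0 ≤ (1 - p) * exp t := mul_nonneg (by linarith) (exp_pos t).le
  rw [div_eq_inv_mul]
  refine ((hasSum_geometric_of_lt_one hr h).mul_right p).congr_fun fun n => ?_
  rw [mul_comm t, exp_nat_mul, mul_pow]
  ring

lemma one_sub_mul_exp_pos {p t : ℝ} (hp0 : 0 < p) (hp1 : p ≤ 1) (ht0 : 0 ≤ t) (ht1 : t ≤ 1)
    (h : 4 * (1 - p) * t ≤ p) : 0 < 1 - (1 - p) * exp t := by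
  have := exp_sub_one_le_add_sq (abs_le.mpr ⟨by linarith, ht1⟩)
  nlinarith [mul_le_mul_of_nonneg_left this (sub_nonneg.2 hp1)]

lemma exp_neg_mul_div_one_sub_le {p t : ℝ} (hp0 : 0 < p) (hp1 : p ≤ 1) (ht0 : 0 ≤ t)
    (ht1 : t ≤ 1) (h : 4 * (1 - p) * t ≤ p) :
    exp (-(t * ((1 - p) / p))) * (p / (1 - (1 - p) * exp t))
      ≤ exp (2 * (1 - p) / p ^ 2 * t ^ 2) := by
  set a := (1 - p) / p
  have ha : 0 ≤ a := div_nonneg (by linarith) hp0.le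
  have hat : 4 * a * t ≤ 1 := by
    rw [show 4 * a * t = 4 * (1 - p) * t / p by ring, div_le_one hp0]; exact h
  have hdenom : 1 - (1 - p) * exp t = p * (1 - a * (exp t - 1)) := by
    simp only [a]; field_simp; ring
  have hexp : 2 * (1 - p) / p ^ 2 * t ^ 2 = 2 * a * (1 + a) * t ^ 2 := by
    simp only [a]; field_simp; ring
  have hD : 0 < 1 - a * (exp t - 1) :=
    pos_of_mul_pos_right (hdenom ▸ one_sub_mul_exp_pos hp0 hp1 ht0 ht1 h) hp0.le
  rw [hdenom, hexp, div_mul_cancel_left₀ hp0.ne', mul_inv_le_iff₀ hD, mul_comm t]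
  exact exp_neg_mul_le_exp_mul_one_sub ha ht0 ht1 hat

section Integral

variable {Ω α : Type*} [MeasurableSpace Ω] [Countable α] {μ : Measure Ω}

/-- `X` need not be measurable: the preimages are replaced by measurable hulls. -/
lemma lintegral_comp_le_tsum_mul_measure_preimage (X : Ω → α) (h : α → ℝ≥0∞) :
    ∫⁻ ω, h (X ω) ∂μ ≤ ∑' a, h a * μ (X ⁻¹' {a}) := by
  set T : α → Set Ω := fun a => toMeasurable μ (X ⁻¹' {a})
  calc ∫⁻ ω, h (X ω) ∂μ ≤ ∫⁻ ω, ∑' a, (T a).indicator (fun _ => h a) ω ∂μ := by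
        refine lintegral_mono fun ω => ?_
        have hω : ω ∈ T (X ω) := subset_toMeasurable μ _ rfl
        calc h (X ω) = (T (X ω)).indicator (fun _ => h (X ω)) ω :=
              (Set.indicator_of_mem hω (fun _ => h (X ω))).symm
          _ ≤ _ := ENNReal.le_tsum (f := fun a => (T a).indicator (fun _ => h a) ω) (X ω)
    _ = ∑' a, h a * μ (X ⁻¹' {a}) := by
        rw [lintegral_tsum fun a => (aemeasurable_const.indicator (measurableSet_toMeasurable _ _))]
        simp only [lintegral_indicator_const (measurableSet_toMeasurable _ _),
          measure_toMeasurable]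

lemma integral_comp_le_of_hasSum {X : Ω → α} {g w : α → ℝ} {S : ℝ} (hg : 0 ≤ g) (hw : 0 ≤ w)
    (hμ : ∀ a, μ (X ⁻¹' {a}) ≤ ENNReal.ofReal (w a)) (hS : HasSum (fun a => g a * w a) S) :
    ∫ ω, g (X ω) ∂μ ≤ S := by
  have hS0 : 0 ≤ S := hS.nonneg fun a => mul_nonneg (hg a) (hw a)
  by_cases hm : AEStronglyMeasurable (fun ω => g (X ω)) μ
  swap
  · rw [integral_non_aestronglyMeasurable hm]; exact hS0
  rw [integral_eq_lintegral_of_nonneg_ae (.of_forall fun ω => hg (X ω)) hm]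
  refine ENNReal.toReal_le_of_le_ofReal hS0 ?_
  calc ∫⁻ ω, ENNReal.ofReal (g (X ω)) ∂μ ≤ ∑' a, ENNReal.ofReal (g a) * μ (X ⁻¹' {a}) :=
        lintegral_comp_le_tsum_mul_measure_preimage X _
    _ ≤ ∑' a, ENNReal.ofReal (g a * w a) := by
        gcongr with a
        rw [ENNReal.ofReal_mul (hg a)]
        gcongr
        exact hμ a
    _ = ENNReal.ofReal S := by
        rw [← ENNReal.ofReal_tsum_of_nonneg (fun a => mul_nonneg (hg a) (hw a)) hS.summable,
          hS.tsum_eq]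

lemma integral_exp_centered_geometric_le {p t : ℝ} (hp0 : 0 < p) (hp1 : p ≤ 1) (ht0 : 0 ≤ t)
    (ht1 : t ≤ 1) (h : 4 * (1 - p) * t ≤ p)
    {Y : Ω → ℕ} (hY : ∀ n, μ (Y ⁻¹' {n}) ≤ ENNReal.ofReal ((1 - p) ^ n * p)) :
    ∫ ω, exp (t * (Y ω - (1 - p) / p)) ∂μ ≤ exp (2 * (1 - p) / p ^ 2 * t ^ 2) := by
  have hlt := sub_pos.1 (one_sub_mul_exp_pos hp0 hp1 ht0 ht1 h)
  have hS := (hasSum_exp_mul_geometric hp1 hlt).mul_left (exp (-(t * ((1 - p) / p))))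
  refine (integral_comp_le_of_hasSum (g := fun n : ℕ => exp (t * (n - (1 - p) / p)))
    (fun _ => (exp_pos _).le) (fun _ => by positivity) hY (hS.congr_fun fun n => ?_)).trans
    (exp_neg_mul_div_one_sub_le hp0 hp1 ht0 ht1 h)
  rw [mul_sub, sub_eq_add_neg, exp_add]
  ring

end Integral

/-- There exist `κ > 0` and `c > 0` such that for every `p ∈ [1-q, 1)` (with `q ∈ (0,1)`
fixed) and `Δ ∈ [0,c]`, a geometric random variable `X` with parameter `p` satisfies
`E[exp((X - 1/p - Δ) κ Δ)] ≤ exp(-0.5 Δ² κ)`. -/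
theorem geometric_exponential_bound (q : ℝ) (hq : q ∈ Set.Ioo (0:ℝ) 1) :
    ∃ κ > (0:ℝ), ∃ c > (0:ℝ),
      ∀ p ∈ Set.Ico (1 - q) (1:ℝ), ∀ Δ ∈ Set.Icc (0:ℝ) c,
        ∀ (Ω : Type) (_ : MeasurableSpace Ω) (μ : Measure Ω), IsProbabilityMeasure μ →
          ∀ X : Ω → ℕ, (∀ ω, 1 ≤ X ω) →
            (∀ m : ℕ, 1 ≤ m → μ {ω | X ω = m} = ENNReal.ofReal ((1 - p) ^ (m - 1) * p)) →
            ∫ ω, Real.exp (((X ω : ℝ) - 1 / p - Δ) * (κ * Δ)) ∂μ ≤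
              Real.exp (-0.5 * Δ ^ 2 * κ) := by
  obtain ⟨hq0, hq1⟩ := hq
  have hκ : 0 < (1 - q) ^ 2 / 4 := by have := sub_pos.2 hq1; positivity
  refine ⟨(1 - q) ^ 2 / 4, hκ, 1, one_pos, ?_⟩
  rintro p ⟨hqp, hp1⟩ Δ ⟨hΔ0, hΔ1⟩ Ω _ μ _ X hX1 hX
  set κ := (1 - q) ^ 2 / 4
  set t := κ * Δ
  have hp0 : 0 < p := by linarith
  have hκ1 : κ ≤ 1 / 4 := by simp only [κ]; nlinarith
  have hκp : 4 * (1 - p) * κ ≤ p ^ 2 := by simp only [κ]; nlinarith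
  have ht0 : 0 ≤ t := by positivity
  have ht1 : t ≤ 1 := by nlinarith
  have h4 : 4 * (1 - p) * t ≤ p := by nlinarith
  have hY : ∀ n, μ ((fun ω => X ω - 1) ⁻¹' {n}) ≤ ENNReal.ofReal ((1 - p) ^ n * p) := by
    intro n
    have hset : (fun ω => X ω - 1) ⁻¹' {n} = {ω | X ω = n + 1} := by
      ext ω
      have := hX1 ω
      simp only [Set.mem_preimage, Set.mem_singleton_iff, Set.mem_ofPred_eq]
      omega
    rw [hset, hX (n + 1) (by omega), Nat.add_sub_cancel]
  have hcenter : ∀ ω, ((X ω : ℝ) - 1 / p - Δ) * t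
      = t * (((X ω - 1 : ℕ) : ℝ) - (1 - p) / p) + -(Δ * t) := by
    intro ω; rw [Nat.cast_sub (hX1 ω)]; field_simp; ring
  calc ∫ ω, exp (((X ω : ℝ) - 1 / p - Δ) * t) ∂μ
      = (∫ ω, exp (t * (((X ω - 1 : ℕ) : ℝ) - (1 - p) / p)) ∂μ) * exp (-(Δ * t)) := by
        simp_rw [hcenter, exp_add]; exact integral_mul_const _ _
    _ ≤ exp (2 * (1 - p) / p ^ 2 * t ^ 2) * exp (-(Δ * t)) := by
        gcongr; exact integral_exp_centered_geometric_le hp0 hp1.le ht0 ht1 h4 hY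
    _ ≤ exp (-0.5 * Δ ^ 2 * κ) := by
        rw [← exp_add, exp_le_exp]
        have : 2 * (1 - p) / p ^ 2 * κ ≤ 1 / 2 := by
          rw [div_mul_eq_mul_div, div_le_iff₀ (by positivity)]; linarith
        nlinarith [mul_le_mul_of_nonneg_right this (by positivity : 0 ≤ κ * Δ ^ 2)]
end

section
/- Let q ∈ (0,1) be the unique zero in (0,1) of p ↦ 2p + ln(1-p). For all sufficiently large n, every real s in the interval [n^{1/4}, n/3] satisfies n·(2(s/n) + ln(1 - s/n)) - 4.5 ≥ (ln s)·√s. -/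
/-!
Put `x = s / n ∈ [0, 1/3]`. From `log (1 - x) ≥ 1 - 1/(1 - x)` one gets `2x + log (1 - x) ≥ x / 2`
on `[0, 1/3]`, so the left-hand side is at least `s / 2 - 4.5`. On the other hand
`log s ≤ 4 s^{1/4}` gives `log s · √s ≤ s / 4` once `s^{1/4} ≥ 16`, which holds for `n ≥ 2^64`;
then `s / 4 ≥ 4.5` absorbs the constant.
-/

open Real

lemma half_le_two_mul_add_log_one_sub {x : ℝ} (hx0 : 0 ≤ x) (hx : x ≤ 1 / 3) :
    x / 2 ≤ 2 * x + log (1 - x) := by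
  have hpos : 0 < 1 - x := by linarith
  have hlog : 1 - (1 - x)⁻¹ ≤ log (1 - x) := one_sub_inv_le_log_of_pos hpos
  have hinv : (1 - x)⁻¹ ≤ 1 + 3 * x / 2 := by
    rw [inv_le_iff_one_le_mul₀ hpos]; nlinarith
  linarith

lemma half_le_mul_two_mul_div_add_log_one_sub_div {n s : ℝ} (hn : 0 < n) (hs0 : 0 ≤ s)
    (hs : s ≤ n / 3) : s / 2 ≤ n * (2 * (s / n) + log (1 - s / n)) := by
  have hx : s / n ≤ 1 / 3 := by rw [div_le_iff₀ hn]; linarith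
  calc s / 2 = n * (s / n / 2) := by field_simp
    _ ≤ n * (2 * (s / n) + log (1 - s / n)) :=
      mul_le_mul_of_nonneg_left (half_le_two_mul_add_log_one_sub (by positivity) hx) hn.le

lemma log_mul_sqrt_le_div_four {s : ℝ} (hs : 2 ^ 16 ≤ s) : log s * √s ≤ s / 4 := by
  have hs0 : 0 ≤ s := by positivity
  set t := s ^ (1 / 4 : ℝ) with ht
  have hlog : log s ≤ 4 * t :=
    calc log s ≤ t / (1 / 4) := log_le_rpow_div hs0 (by norm_num)
      _ = 4 * t := by ring
  have hsqrt : √s = t * t := by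
    rw [ht, ← rpow_add' hs0 (by norm_num), sqrt_eq_rpow]; norm_num
  have hs_eq : s = (t * t) * (t * t) := by rw [← hsqrt, mul_self_sqrt hs0]
  have ht16 : 16 ≤ t := by
    calc (16 : ℝ) = ((2 : ℝ) ^ 16) ^ (1 / 4 : ℝ) := by
          rw [show (2 : ℝ) ^ 16 = 16 ^ (4 : ℝ) by norm_num, ← rpow_mul (by norm_num)]; norm_num
      _ ≤ t := rpow_le_rpow (by positivity) hs (by norm_num)
  calc log s * √s ≤ 4 * t * (t * t) := by
        rw [hsqrt]; exact mul_le_mul_of_nonneg_right hlog (by positivity)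
    _ ≤ s / 4 := by
        have : 0 ≤ t * t * t * (t - 16) := mul_nonneg (by positivity) (by linarith)
        rw [hs_eq]; linarith

theorem ws_bound_first_interval_general :
    ∃ N : ℕ, ∀ n : ℕ, N ≤ n →
      ∀ s : ℝ, s ∈ Set.Icc ((n:ℝ) ^ ((1:ℝ)/4)) ((n:ℝ)/3) →
        Real.log s * Real.sqrt s ≤
          (n:ℝ) * (2 * (s/n) + Real.log (1 - s/n)) - 4.5 := by
  refine ⟨2 ^ 64, fun n hn s ⟨hs_lo, hs_hi⟩ => ?_⟩
  have hn' : (2 : ℝ) ^ 64 ≤ n := by exact_mod_cast hn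
  have hs : (2 : ℝ) ^ 16 ≤ s :=
    calc (2 : ℝ) ^ 16 = ((2 : ℝ) ^ 64) ^ ((1 : ℝ) / 4) := by
          rw [show (2 : ℝ) ^ 64 = (2 ^ 16) ^ (4 : ℝ) by norm_num, ← rpow_mul (by norm_num)]
          norm_num
      _ ≤ (n : ℝ) ^ ((1 : ℝ) / 4) := rpow_le_rpow (by positivity) hn' (by norm_num)
      _ ≤ s := hs_lo
  have hlhs := half_le_mul_two_mul_div_add_log_one_sub_div (by positivity) (by positivity) hs_hi
  have hrhs := log_mul_sqrt_le_div_four hs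
  linarith

/-- Let `q ∈ (0,1)` be the unique zero of `p ↦ 2p + log(1-p)` in `(0,1)`. For all
sufficiently large `n`, every real `s ∈ [n^{1/4}, n/3]` satisfies
`n (2 s/n + log(1 - s/n)) - 4.5 ≥ (log s) √s`. -/
theorem ws_bound_first_interval (q : ℝ) (hq : q ∈ Set.Ioo (0:ℝ) 1)
    (hzero : 2 * q + Real.log (1 - q) = 0)
    (huniq : ∀ p ∈ Set.Ioo (0:ℝ) 1, 2 * p + Real.log (1 - p) = 0 → p = q) :
    ∃ N : ℕ, ∀ n : ℕ, N ≤ n →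
      ∀ s : ℝ, s ∈ Set.Icc ((n:ℝ) ^ ((1:ℝ)/4)) ((n:ℝ)/3) →
        Real.log s * Real.sqrt s ≤
          (n:ℝ) * (2 * (s/n) + Real.log (1 - s/n)) - 4.5 :=
  ws_bound_first_interval_general
end

section
/- Let q be the unique zero in (0,1) of h(x) = 2x + ln(1-x). Then h'(q) = 2 - 1/(1-q) < 0, and for all sufficiently large n and all s in [n/2, nq - (ln n)²·√n], one has h(s/n) ≥ -h'(q)·(ln n)²/(2√n). -/
/-!
With `h x = 2x + log (1 - x)`: `h` is strictly increasing on `(-∞, 1/2]` and `h 0 = 0`, so its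
zero `q` lies in `(1/2, 1)`, where `h' < 0` and `h` is antitone. Since `h q = 0` and `h'(q) < 0`,
differentiability at `q` gives `h (q - δ) > -h'(q) δ / 2` for all small `δ > 0`. Take
`δ = (log n)² / √n → 0`; then `s / n ∈ [1/2, q - δ]`, and antitonicity gives
`h (s / n) ≥ h (q - δ)`.
-/

open Filter Real Set Topology

theorem HasDerivAt.eventually_sub_mul_lt_apply_sub {f : ℝ → ℝ} {f' m a : ℝ}
    (hf : HasDerivAt f f' a) (hm : f' < m) :
    ∀ᶠ δ in 𝓝[>] 0, f a - m * δ < f (a - δ) := by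
  have hslope : ∀ᶠ t in 𝓝[<] 0, t⁻¹ * (f (a + t) - f a) < m :=
    hf.tendsto_slope_zero_left.eventually (gt_mem_nhds hm)
  have hneg : Tendsto (fun δ : ℝ => -δ) (𝓝[>] 0) (𝓝[<] 0) := by
    simpa using tendsto_neg_nhdsGT_neg (a := (0 : ℝ))
  filter_upwards [hneg.eventually hslope, self_mem_nhdsWithin] with δ hδ (hδ0 : 0 < δ)
  rw [← sub_eq_add_neg, inv_neg, neg_mul, neg_lt, lt_inv_mul_iff₀ hδ0] at hδ
  linarith

theorem hasDerivAt_two_mul_add_log_one_sub {x : ℝ} (hx : x < 1) :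
    HasDerivAt (fun x => 2 * x + log (1 - x)) (2 - 1 / (1 - x)) x := by
  have hlog := ((hasDerivAt_id' x).const_sub 1).log (by linarith)
  exact (((hasDerivAt_id' x).const_mul 2).add hlog).congr_deriv (by ring)

theorem strictMonoOn_two_mul_add_log_one_sub :
    StrictMonoOn (fun x => 2 * x + log (1 - x)) (Iic (1 / 2)) := by
  refine strictMonoOn_of_deriv_pos (convex_Iic _) ?_ fun x hx => ?_
  · intro x hx
    have hx : x ≤ 1 / 2 := hx
    exact (hasDerivAt_two_mul_add_log_one_sub (by linarith)).continuousAt.continuousWithinAt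
  · rw [interior_Iic] at hx
    have hx : x < 1 / 2 := hx
    rw [(hasDerivAt_two_mul_add_log_one_sub (by linarith)).deriv, sub_pos,
      div_lt_iff₀ (by linarith)]
    linarith

theorem antitoneOn_two_mul_add_log_one_sub :
    AntitoneOn (fun x => 2 * x + log (1 - x)) (Ico (1 / 2) 1) := by
  have hderiv : ∀ x ∈ Ico (1 / 2 : ℝ) 1,
      HasDerivAt (fun x => 2 * x + log (1 - x)) (2 - 1 / (1 - x)) x :=
    fun x hx => hasDerivAt_two_mul_add_log_one_sub hx.2
  refine antitoneOn_of_deriv_nonpos (convex_Ico _ _)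
    (fun x hx => (hderiv x hx).continuousAt.continuousWithinAt)
    (fun x hx => (hderiv x (interior_subset hx)).differentiableAt.differentiableWithinAt)
    fun x hx => ?_
  rw [interior_Ico] at hx
  rw [(hderiv x (Ioo_subset_Ico_self hx)).deriv, sub_nonpos, le_div_iff₀ (by linarith [hx.2])]
  linarith [hx.1]

theorem half_lt_of_two_mul_add_log_one_sub_eq_zero {q : ℝ} (hq : q ∈ Ioo (0 : ℝ) 1)
    (hzero : 2 * q + log (1 - q) = 0) : 1 / 2 < q := by
  by_contra! h
  have := strictMonoOn_two_mul_add_log_one_sub (by norm_num : (0:ℝ) ∈ Iic (1/2)) h hq.1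
  simp_all

theorem tendsto_log_sq_div_sqrt_atTop :
    Tendsto (fun x : ℝ => log x ^ 2 / √x) atTop (𝓝[>] 0) := by
  refine tendsto_nhdsWithin_iff.2 ⟨?_, (eventually_gt_atTop 1).mono fun x hx => ?_⟩
  · refine (isLittleO_log_rpow_rpow_atTop 2 one_half_pos).tendsto_div_nhds_zero.congr fun x => ?_
    simp only [sqrt_eq_rpow, rpow_two]
  · have := log_pos hx
    exact div_pos (by positivity) (sqrt_pos.2 (by linarith))

theorem div_le_sub_div_sqrt {n s q L : ℝ} (hn : 0 < n) (hs : s ≤ n * q - L * √n) :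
    s / n ≤ q - L / √n := by
  have hL : L / √n * n = L * √n := by
    rw [div_mul_eq_mul_div, div_eq_iff (sqrt_pos.2 hn).ne', mul_assoc, mul_self_sqrt hn.le]
  rw [div_le_iff₀ hn, sub_mul, hL]
  linarith

theorem h_bound_third_interval_general (q : ℝ) (hq : q ∈ Set.Ioo (0:ℝ) 1)
    (hzero : 2 * q + Real.log (1 - q) = 0) :
    2 - 1 / (1 - q) < 0 ∧
    ∃ N : ℕ, ∀ n : ℕ, N ≤ n →
      ∀ s : ℝ, s ∈ Set.Icc ((n:ℝ)/2) ((n:ℝ) * q - (Real.log n) ^ 2 * Real.sqrt n) →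
        -(2 - 1 / (1 - q)) * (Real.log n) ^ 2 / (2 * Real.sqrt n) ≤
          2 * (s/n) + Real.log (1 - s/n) := by
  have hderiv : 2 - 1 / (1 - q) < 0 := by
    have := half_lt_of_two_mul_add_log_one_sub_eq_zero hq hzero
    rw [sub_neg, lt_div_iff₀ (by linarith [hq.2])]
    linarith
  refine ⟨hderiv, ?_⟩
  have hnear := (hasDerivAt_two_mul_add_log_one_sub hq.2).eventually_sub_mul_lt_apply_sub
    (m := (2 - 1 / (1 - q)) / 2) (by linarith)
  have hδ : Tendsto (fun n : ℕ => log n ^ 2 / √n) atTop (𝓝[>] 0) :=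
    tendsto_log_sq_div_sqrt_atTop.comp tendsto_natCast_atTop_atTop
  obtain ⟨N, hN⟩ := eventually_atTop.1 <|
    (hδ.eventually (hnear.and self_mem_nhdsWithin)).and (eventually_gt_atTop 0)
  refine ⟨N, fun n hn s hs => ?_⟩
  obtain ⟨⟨hq_sub, hδ_pos : 0 < log n ^ 2 / √n⟩, hn_pos⟩ := hN n hn
  set δ := log n ^ 2 / √n
  replace hn_pos : (0 : ℝ) < n := Nat.cast_pos.2 hn_pos
  have hs_lower : 1 / 2 ≤ s / n := (le_div_iff₀ hn_pos).2 (by linarith [hs.1])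
  have hs_upper : s / n ≤ q - δ := div_le_sub_div_sqrt hn_pos hs.2
  calc -(2 - 1 / (1 - q)) * log n ^ 2 / (2 * √n)
      = 2 * q + log (1 - q) - (2 - 1 / (1 - q)) / 2 * δ := by rw [hzero]; ring
    _ ≤ 2 * (q - δ) + log (1 - (q - δ)) := hq_sub.le
    _ ≤ 2 * (s / n) + log (1 - s / n) :=
      antitoneOn_two_mul_add_log_one_sub ⟨hs_lower, by linarith [hq.2]⟩
        ⟨hs_lower.trans hs_upper, by linarith [hq.2]⟩ hs_upper

/-- Let `q` be the unique zero of `h x = 2x + log(1-x)` in `(0,1)`. Then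
`h'(q) = 2 - 1/(1-q) < 0`, and for all sufficiently large `n` and all
`s ∈ [n/2, nq - (log n)² √n]`, one has `h(s/n) ≥ -h'(q) (log n)²/(2√n)`. -/
theorem h_bound_third_interval (q : ℝ) (hq : q ∈ Set.Ioo (0:ℝ) 1)
    (hzero : 2 * q + Real.log (1 - q) = 0)
    (huniq : ∀ p ∈ Set.Ioo (0:ℝ) 1, 2 * p + Real.log (1 - p) = 0 → p = q) :
    2 - 1 / (1 - q) < 0 ∧
    ∃ N : ℕ, ∀ n : ℕ, N ≤ n →
      ∀ s : ℝ, s ∈ Set.Icc ((n:ℝ)/2) ((n:ℝ) * q - (Real.log n) ^ 2 * Real.sqrt n) →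
        -(2 - 1 / (1 - q)) * (Real.log n) ^ 2 / (2 * Real.sqrt n) ≤
          2 * (s/n) + Real.log (1 - s/n) :=
  h_bound_third_interval_general q hq hzero
end
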